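/- (Analytic bound underlying Corollary 3.13.) Let Φ be a branching mechanism with drift parameter α ∈ ℝ, let λ ≥ 0, and let u_t(λ) be the unique locally bounded nonnegative solution of u_t = λt − ∫₀ᵗ Φ(u_s) ds. Then for all t ≥ 0, 0 ≤ λ − Φ(u_t(λ)) ≤ λ e^{−αt}. Consequently, for every x > 0, the function g(t) = x (λ − Φ(u_t(λ))) exp(−x u_t(λ)) satisfies g(t) ≤ x λ e^{−αt} for all t ≥ 0. -/

import Mathlib

/-!
Write `h = λ - Φ ∘ u`. Since `Φ` is continuous on `[0, ∞)`, `Φ ∘ u` is locally integrable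
(where it would not be, the integral in the equation takes the junk value `0` and `u` is
linear, which makes `Φ ∘ u` integrable after all), so `u` is `C¹` on `(0, ∞)` with `u' = h`.
If `h` became negative after its last zero `s₀`, then `u` would decrease, and convexity with
`Φ 0 = 0` would give `Φ (u t) ≤ max (Φ 0) (Φ (u s₀)) ≤ λ`; hence `h ≥ 0` and `u` is
nondecreasing. As `v ↦ Φ v - α v` is nondecreasing, `G = h + α u` is nonincreasing, and
`e^{αt} h(t) = e^{αt} G(t) - α ∫₀ᵗ e^{αs} G(s) ds ≤ G(0) = λ` for any nonincreasing `G`.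
-/

open MeasureTheory Filter Set Topology

/-- The branching mechanism `Φ(λ) = αλ + βλ² + ∫_{(0,∞)} (e^{-λθ} - 1 + λθ) π(dθ)`. -/
noncomputable def Phi (α β : ℝ) (π : Measure ℝ) (lam : ℝ) : ℝ :=
  α * lam + β * lam ^ 2 + ∫ θ, (Real.exp (-lam * θ) - 1 + lam * θ) ∂π

/-- `u` is a locally bounded nonnegative solution of `u_t = λt - ∫₀ᵗ Φ(u_s) ds`. -/
def IsMassSolution (Φ : ℝ → ℝ) (lam : ℝ) (u : ℝ → ℝ) : Prop :=
  (∀ t, 0 ≤ t → 0 ≤ u t) ∧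
  (∀ T, 0 < T → BddAbove (u '' Set.Icc 0 T)) ∧
  (∀ t, 0 ≤ t → u t = lam * t - ∫ s in (0:ℝ)..t, Φ (u s))

noncomputable def phiIntegrand (l θ : ℝ) : ℝ := Real.exp (-l * θ) - 1 + l * θ

lemma phiIntegrand_nonneg (l θ : ℝ) : 0 ≤ phiIntegrand l θ := by
  have := Real.add_one_le_exp (-l * θ)
  unfold phiIntegrand
  linarith

lemma phiIntegrand_le_min {l θ : ℝ} (hl : 0 ≤ l) (hθ : 0 ≤ θ) :
    phiIntegrand l θ ≤ min (l * θ) ((l * θ) ^ 2) := by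
  set x := l * θ
  have hx : 0 ≤ x := mul_nonneg hl hθ
  have hexp : Real.exp (-x) ≤ 1 := Real.exp_le_one_iff.2 (by linarith)
  have hlower : 1 - x ≤ Real.exp (-x) := Real.one_sub_le_exp_neg x
  -- equivalently `e^{-x} - 1 + x ≤ x (1 - e^{-x})`, which gives both bounds
  have hmul : Real.exp (-x) * (1 + x) ≤ 1 := by
    calc Real.exp (-x) * (1 + x) ≤ Real.exp (-x) * Real.exp x := by
          gcongr; linarith [Real.add_one_le_exp x]
      _ = 1 := by rw [← Real.exp_add, neg_add_cancel, Real.exp_zero]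
  have hk : phiIntegrand l θ = Real.exp (-x) - 1 + x := by
    simp only [phiIntegrand, x, neg_mul]
  rw [hk]
  exact le_min (by linarith) (by nlinarith)

lemma phiIntegrand_le_max_mul_min {l L θ : ℝ} (hl : 0 ≤ l) (hlL : l ≤ L) (hθ : 0 ≤ θ) :
    phiIntegrand l θ ≤ max L (L ^ 2) * min θ (θ ^ 2) := by
  have hk := phiIntegrand_le_min hl hθ
  rcases le_total θ 1 with hθ1 | hθ1
  · rw [min_eq_right (by nlinarith : θ ^ 2 ≤ θ)]
    have : l ^ 2 ≤ L ^ 2 := by gcongr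
    nlinarith [min_le_right (l * θ) ((l * θ) ^ 2), le_max_right L (L ^ 2), sq_nonneg θ]
  · rw [min_eq_left (by nlinarith : θ ≤ θ ^ 2)]
    nlinarith [min_le_left (l * θ) ((l * θ) ^ 2), le_max_left L (L ^ 2)]

lemma phiIntegrand_mono {v w θ : ℝ} (hv : 0 ≤ v) (hvw : v ≤ w) (hθ : 0 ≤ θ) :
    phiIntegrand v θ ≤ phiIntegrand w θ := by
  have hv1 : Real.exp (-v * θ) ≤ 1 := Real.exp_le_one_iff.2 (by nlinarith)
  have hsplit : Real.exp (-w * θ) = Real.exp (-v * θ) * Real.exp (-((w - v) * θ)) := by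
    rw [← Real.exp_add]; ring_nf
  have hw : Real.exp (-v * θ) * (1 - (w - v) * θ) ≤ Real.exp (-w * θ) := by
    rw [hsplit]; gcongr; exact Real.one_sub_le_exp_neg _
  have hgap : 0 ≤ (1 - Real.exp (-v * θ)) * ((w - v) * θ) :=
    mul_nonneg (by linarith) (mul_nonneg (by linarith) hθ)
  unfold phiIntegrand
  linarith

lemma convexOn_phiIntegrand (θ : ℝ) : ConvexOn ℝ univ (fun l => phiIntegrand l θ) := by
  refine ⟨convex_univ, fun x _ y _ a b ha hb hab => ?_⟩
  have h := convexOn_exp.2 (mem_univ (-x * θ)) (mem_univ (-y * θ)) ha hb hab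
  simp only [smul_eq_mul, phiIntegrand] at h ⊢
  rw [show -(a * x + b * y) * θ = a * (-x * θ) + b * (-y * θ) by ring]
  linear_combination h + hab

section Phi

variable {α β : ℝ} {π : Measure ℝ}

lemma Phi_eq (l : ℝ) : Phi α β π l = α * l + β * l ^ 2 + ∫ θ, phiIntegrand l θ ∂π := rfl

lemma Phi_zero : Phi α β π 0 = 0 := by
  simp [Phi]

lemma integrable_phiIntegrand (hπ : ∀ᵐ θ ∂π, 0 ≤ θ)
    (hint : Integrable (fun θ => min θ (θ ^ 2)) π) {l : ℝ} (hl : 0 ≤ l) :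
    Integrable (phiIntegrand l) π := by
  refine (hint.const_mul (max l (l ^ 2))).mono'
    (Continuous.aestronglyMeasurable (by unfold phiIntegrand; fun_prop)) ?_
  filter_upwards [hπ] with θ hθ
  rw [Real.norm_of_nonneg (phiIntegrand_nonneg l θ)]
  exact phiIntegrand_le_max_mul_min hl le_rfl hθ

lemma continuousOn_Phi (hπ : ∀ᵐ θ ∂π, 0 ≤ θ)
    (hint : Integrable (fun θ => min θ (θ ^ 2)) π) :
    ContinuousOn (Phi α β π) (Ici 0) := by
  have hI : ContinuousOn (fun l => ∫ θ, phiIntegrand l θ ∂π) (Ici 0) := by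
    intro l₀ _
    have hnear : ∀ᶠ l in 𝓝[Ici 0] l₀, l ∈ Ici 0 ∩ Iio (l₀ + 1) :=
      inter_mem self_mem_nhdsWithin (nhdsWithin_le_nhds (Iio_mem_nhds (lt_add_one l₀)))
    refine continuousWithinAt_of_dominated
      (bound := fun θ => max (l₀ + 1) ((l₀ + 1) ^ 2) * min θ (θ ^ 2)) ?_ ?_
      (hint.const_mul _) (ae_of_all _ fun θ => ?_)
    · exact Eventually.of_forall fun l =>
        Continuous.aestronglyMeasurable (by unfold phiIntegrand; fun_prop)
    · filter_upwards [hnear] with l hl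
      filter_upwards [hπ] with θ hθ
      rw [Real.norm_of_nonneg (phiIntegrand_nonneg l θ)]
      exact phiIntegrand_le_max_mul_min hl.1 hl.2.le hθ
    · exact Continuous.continuousWithinAt (by unfold phiIntegrand; fun_prop)
  exact ContinuousOn.add (by fun_prop) hI

lemma convexOn_Phi (hβ : 0 ≤ β) (hπ : ∀ᵐ θ ∂π, 0 ≤ θ)
    (hint : Integrable (fun θ => min θ (θ ^ 2)) π) :
    ConvexOn ℝ (Ici 0) (Phi α β π) := by
  refine ⟨convex_Ici 0, fun x hx y hy a b ha hb hab => ?_⟩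
  have hxy : (0 : ℝ) ≤ a * x + b * y := by simp only [mem_Ici] at hx hy; positivity
  have hI : ∫ θ, phiIntegrand (a * x + b * y) θ ∂π ≤
      a * ∫ θ, phiIntegrand x θ ∂π + b * ∫ θ, phiIntegrand y θ ∂π := by
    have hix := (integrable_phiIntegrand hπ hint hx).const_mul a
    have hiy := (integrable_phiIntegrand hπ hint hy).const_mul b
    rw [← integral_const_mul, ← integral_const_mul, ← integral_add hix hiy]
    exact integral_mono (integrable_phiIntegrand hπ hint hxy) (hix.add hiy) fun θ =>
      (convexOn_phiIntegrand θ).2 (mem_univ x) (mem_univ y) ha hb hab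
  have hsq : (a * x + b * y) ^ 2 ≤ a * x ^ 2 + b * y ^ 2 := by
    obtain rfl : b = 1 - a := by linarith
    nlinarith [mul_nonneg (mul_nonneg ha hb) (sq_nonneg (x - y))]
  simp only [smul_eq_mul, Phi_eq]
  nlinarith [mul_le_mul_of_nonneg_left hsq hβ]

lemma monotoneOn_Phi_sub_mul (hβ : 0 ≤ β) (hπ : ∀ᵐ θ ∂π, 0 ≤ θ)
    (hint : Integrable (fun θ => min θ (θ ^ 2)) π) :
    MonotoneOn (fun l => Phi α β π l - α * l) (Ici 0) := by
  intro v hv w hw hvw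
  have hI : ∫ θ, phiIntegrand v θ ∂π ≤ ∫ θ, phiIntegrand w θ ∂π := by
    refine integral_mono_ae (integrable_phiIntegrand hπ hint hv)
      (integrable_phiIntegrand hπ hint hw) ?_
    filter_upwards [hπ] with θ hθ
    exact phiIntegrand_mono hv hvw hθ
  have hsq : β * v ^ 2 ≤ β * w ^ 2 := by
    simp only [mem_Ici] at hv
    gcongr
  simp only [Phi_eq]
  linarith

end Phi

lemma exp_mul_sub_integral_le_of_antitoneOn {G : ℝ → ℝ} {α t : ℝ} (ht : 0 ≤ t)
    (hG : AntitoneOn G (Icc 0 t)) (hGc : ContinuousOn G (Icc 0 t)) :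
    Real.exp (α * t) * G t - α * ∫ s in (0:ℝ)..t, Real.exp (α * s) * G s ≤ G 0 := by
  have hexp : ∫ s in (0:ℝ)..t, Real.exp (α * s) * α = Real.exp (α * t) - 1 := by
    rw [intervalIntegral.integral_eq_sub_of_hasDerivAt
      (fun s _ => ((hasDerivAt_id s).const_mul α).exp.congr_deriv (by simp))
      ((by fun_prop : Continuous fun s => Real.exp (α * s) * α).intervalIntegrable 0 t)]
    simp
  have hcompare : ∀ c, (∀ s ∈ Icc 0 t, α * c ≤ α * G s) →
      (Real.exp (α * t) - 1) * c ≤ α * ∫ s in (0:ℝ)..t, Real.exp (α * s) * G s := by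
    intro c hc
    calc (Real.exp (α * t) - 1) * c = ∫ s in (0:ℝ)..t, Real.exp (α * s) * (α * c) := by
          rw [← hexp, ← intervalIntegral.integral_mul_const]
          simp only [mul_assoc]
      _ ≤ ∫ s in (0:ℝ)..t, Real.exp (α * s) * (α * G s) :=
          intervalIntegral.integral_mono_on ht
            ((by fun_prop : Continuous fun s => Real.exp (α * s) * (α * c)).intervalIntegrable 0 t)
            (((by fun_prop : Continuous fun s => Real.exp (α * s)).continuousOn.mul
              (continuousOn_const.mul hGc)).intervalIntegrable_of_Icc ht)
            fun s hs => mul_le_mul_of_nonneg_left (hc s hs) (Real.exp_pos _).le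
      _ = α * ∫ s in (0:ℝ)..t, Real.exp (α * s) * G s := by
          rw [← intervalIntegral.integral_const_mul]
          simp only [mul_left_comm]
  have hGt0 : G t ≤ G 0 := hG ⟨le_rfl, ht⟩ ⟨ht, le_rfl⟩ ht
  rcases le_total 0 α with hα | hα
  · have := hcompare (G t) fun s hs => mul_le_mul_of_nonneg_left (hG hs ⟨ht, le_rfl⟩ hs.2) hα
    linarith
  · have := hcompare (G 0) fun s hs =>
      mul_le_mul_of_nonpos_left (hG ⟨le_rfl, ht⟩ hs hs.1) hα
    nlinarith [Real.exp_pos (α * t)]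

namespace IsMassSolution

variable {Φ : ℝ → ℝ} {lam : ℝ} {u : ℝ → ℝ}

lemma apply_zero (hu : IsMassSolution Φ lam u) : u 0 = 0 := by
  simpa using hu.2.2 0 le_rfl

lemma eq_mul_of_not_integrableOn (hu : IsMassSolution Φ lam u) {t : ℝ} (ht : 0 ≤ t)
    (h : ¬IntegrableOn (fun s => Φ (u s)) (Ioc 0 t)) : u t = lam * t := by
  rw [hu.2.2 t ht, intervalIntegral.integral_undef, sub_zero]
  rwa [intervalIntegrable_iff_integrableOn_Ioc_of_le ht]

lemma continuousOn_Icc_of_integrableOn (hu : IsMassSolution Φ lam u) {b : ℝ} (hb : 0 ≤ b)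
    (hi : IntegrableOn (fun s => Φ (u s)) (Ioc 0 b)) : ContinuousOn u (Icc 0 b) := by
  have hprim := intervalIntegral.continuousOn_primitive_interval'
    ((intervalIntegrable_iff_integrableOn_Ioc_of_le hb).2 hi) left_mem_uIcc
  rw [uIcc_of_le hb] at hprim
  exact ((continuousOn_const.mul continuousOn_id).sub hprim).congr fun x hx => hu.2.2 x hx.1

lemma exists_norm_le (hu : IsMassSolution Φ lam u) (hΦ : ContinuousOn Φ (Ici 0)) {T : ℝ}
    (hT : 0 ≤ T) : ∃ C, ∀ s ∈ Icc 0 T, ‖Φ (u s)‖ ≤ C := by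
  obtain ⟨M, hM⟩ := hu.2.1 (T + 1) (by linarith)
  obtain ⟨C, hC⟩ := (isCompact_Icc (a := 0) (b := M)).exists_bound_of_continuousOn
    (hΦ.mono Icc_subset_Ici_self)
  exact ⟨C, fun s hs => hC _ ⟨hu.1 s hs.1, hM ⟨s, ⟨hs.1, by linarith [hs.2]⟩, rfl⟩⟩⟩

lemma integrableOn_of_forall_lt (hu : IsMassSolution Φ lam u) (hΦ : ContinuousOn Φ (Ici 0))
    {t₀ C : ℝ} (hC : ∀ s ∈ Icc 0 t₀, ‖Φ (u s)‖ ≤ C)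
    (hi : ∀ a ∈ Ico 0 t₀, IntegrableOn (fun s => Φ (u s)) (Ioc 0 a)) :
    IntegrableOn (fun s => Φ (u s)) (Ioc 0 t₀) := by
  have hcont : ContinuousOn u (Ioo 0 t₀) := by
    intro t ht
    obtain ⟨a, hta, hat₀⟩ := exists_between ht.2
    exact ((hu.continuousOn_Icc_of_integrableOn (ht.1.trans hta).le
      (hi a ⟨(ht.1.trans hta).le, hat₀⟩)).continuousAt
      (Icc_mem_nhds ht.1 hta)).continuousWithinAt
  have hf : ContinuousOn (fun s => Φ (u s)) (Ioo 0 t₀) :=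
    hΦ.comp hcont fun s hs => hu.1 s hs.1.le
  refine (integrableOn_Ioc_iff_integrableOn_Ioo).2 <|
    IntegrableOn.of_bound measure_Ioo_lt_top (hf.aestronglyMeasurable measurableSet_Ioo) C ?_
  exact (ae_restrict_iff' measurableSet_Ioo).2 <|
    Eventually.of_forall fun s hs => hC s ⟨hs.1.le, hs.2.le⟩

lemma integrableOn (hu : IsMassSolution Φ lam u) (hΦ : ContinuousOn Φ (Ici 0)) (hlam : 0 ≤ lam)
    {T : ℝ} (hT : 0 ≤ T) : IntegrableOn (fun s => Φ (u s)) (Ioc 0 T) := by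
  set A := {t ∈ Icc 0 T | IntegrableOn (fun s => Φ (u s)) (Ioc 0 t)}
  have h0A : 0 ∈ A := ⟨⟨le_rfl, hT⟩, by simp⟩
  have hA : BddAbove A := ⟨T, fun t ht => ht.1.2⟩
  set t₀ := sSup A
  have ht₀ : 0 ≤ t₀ := le_csSup hA h0A
  have ht₀T : t₀ ≤ T := csSup_le ⟨0, h0A⟩ fun t ht => ht.1.2
  obtain ⟨C, hC⟩ := hu.exists_norm_le hΦ hT
  have hleft : IntegrableOn (fun s => Φ (u s)) (Ioc 0 t₀) :=
    hu.integrableOn_of_forall_lt hΦ (fun s hs => hC s ⟨hs.1, hs.2.trans ht₀T⟩) fun a ha => by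
      obtain ⟨b, hb, hab⟩ := exists_lt_of_lt_csSup ⟨0, h0A⟩ ha.2
      exact hb.2.mono_set (Ioc_subset_Ioc_right hab.le)
  -- past `t₀` the integral in the equation takes the junk value `0`, so `u` is linear there
  have hlin : EqOn (fun s => Φ (lam * s)) (fun s => Φ (u s)) (Ioc t₀ T) := fun t ht => by
    have htA : t ∉ A := fun h => ht.1.not_ge (le_csSup hA h)
    simp only [hu.eq_mul_of_not_integrableOn (ht₀.trans ht.1.le) fun h =>
      htA ⟨⟨ht₀.trans ht.1.le, ht.2⟩, h⟩]
  have hright : IntegrableOn (fun s => Φ (u s)) (Ioc t₀ T) := by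
    have : ContinuousOn (fun s => Φ (lam * s)) (Icc t₀ T) :=
      hΦ.comp (by fun_prop) fun s hs => mul_nonneg hlam (ht₀.trans hs.1)
    exact (this.integrableOn_Icc.mono_set Ioc_subset_Icc_self).congr_fun hlin measurableSet_Ioc
  exact Ioc_union_Ioc_eq_Ioc ht₀ ht₀T ▸ hleft.union hright

lemma continuousOn (hu : IsMassSolution Φ lam u) (hΦ : ContinuousOn Φ (Ici 0)) (hlam : 0 ≤ lam) :
    ContinuousOn u (Ici 0) := by
  intro t ht
  have ht1 : 0 ≤ t + 1 := by linarith [mem_Ici.1 ht]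
  refine ((hu.continuousOn_Icc_of_integrableOn ht1 (hu.integrableOn hΦ hlam ht1)) t
    ⟨ht, by linarith⟩).mono_of_mem_nhdsWithin ?_
  rw [← Ici_inter_Iic]
  exact inter_mem_nhdsWithin _ (Iic_mem_nhds (lt_add_one t))

lemma continuousOn_comp (hu : IsMassSolution Φ lam u) (hΦ : ContinuousOn Φ (Ici 0))
    (hlam : 0 ≤ lam) : ContinuousOn (fun s => Φ (u s)) (Ici 0) :=
  hΦ.comp (hu.continuousOn hΦ hlam) fun s hs => hu.1 s hs

lemma hasDerivAt (hu : IsMassSolution Φ lam u) (hΦ : ContinuousOn Φ (Ici 0)) (hlam : 0 ≤ lam)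
    {t : ℝ} (ht : 0 < t) : HasDerivAt u (lam - Φ (u t)) t := by
  have hf := hu.continuousOn_comp hΦ hlam
  have hprim := intervalIntegral.integral_hasDerivAt_right
    ((intervalIntegrable_iff_integrableOn_Ioc_of_le ht.le).2 (hu.integrableOn hΦ hlam ht.le))
    ((hf.mono Ioi_subset_Ici_self).stronglyMeasurableAtFilter isOpen_Ioi t ht)
    (hf.continuousAt (Ici_mem_nhds ht))
  refine (((hasDerivAt_id t).const_mul lam).sub hprim).congr_of_eventuallyEq ?_ |>.congr_deriv
    (by simp)
  filter_upwards [Ici_mem_nhds ht] with s hs using hu.2.2 s hs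

lemma comp_le (hu : IsMassSolution Φ lam u) (hΦ : ContinuousOn Φ (Ici 0))
    (hconv : ConvexOn ℝ (Ici 0) Φ) (h0 : Φ 0 = 0) (hlam : 0 ≤ lam) {t₀ : ℝ} (ht₀ : 0 ≤ t₀) :
    Φ (u t₀) ≤ lam := by
  by_contra! hgt
  set A := {s ∈ Icc 0 t₀ | Φ (u s) ≤ lam}
  have h0A : 0 ∈ A := ⟨⟨le_rfl, ht₀⟩, by rwa [hu.apply_zero, h0]⟩
  have hA : BddAbove A := ⟨t₀, fun s hs => hs.1.2⟩
  have hAc : IsClosed A := ((hu.continuousOn_comp hΦ hlam).mono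
    Icc_subset_Ici_self).preimage_isClosed_of_isClosed isClosed_Icc isClosed_Iic
  set s₀ := sSup A
  have hs₀ : s₀ ∈ A := hAc.csSup_mem ⟨0, h0A⟩ hA
  have hlt : s₀ < t₀ := hs₀.1.2.lt_of_ne fun h => hgt.not_ge (h ▸ hs₀.2)
  have hanti : StrictAntiOn u (Icc s₀ t₀) :=
    strictAntiOn_of_deriv_neg (convex_Icc _ _)
      ((hu.continuousOn hΦ hlam).mono fun s hs => hs₀.1.1.trans hs.1) fun s hs => by
        rw [interior_Icc] at hs
        rw [(hu.hasDerivAt hΦ hlam (hs₀.1.1.trans_lt hs.1)).deriv, sub_neg]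
        by_contra! hle
        exact hs.1.not_ge (le_csSup hA ⟨⟨hs₀.1.1.trans hs.1.le, hs.2.le⟩, hle⟩)
  have hseg : u t₀ ∈ segment ℝ 0 (u s₀) := by
    rw [segment_eq_Icc (hu.1 _ hs₀.1.1)]
    exact ⟨hu.1 t₀ ht₀, (hanti ⟨le_rfl, hlt.le⟩ ⟨hlt.le, le_rfl⟩ hlt).le⟩
  have hmax := hconv.le_on_segment self_mem_Ici (hu.1 _ hs₀.1.1) hseg
  rw [h0] at hmax
  exact hgt.not_ge (hmax.trans (max_le hlam hs₀.2))

lemma monotoneOn (hu : IsMassSolution Φ lam u) (hΦ : ContinuousOn Φ (Ici 0))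
    (hconv : ConvexOn ℝ (Ici 0) Φ) (h0 : Φ 0 = 0) (hlam : 0 ≤ lam) : MonotoneOn u (Ici 0) := by
  refine monotoneOn_of_hasDerivWithinAt_nonneg (f' := fun t => lam - Φ (u t)) (convex_Ici 0)
    (hu.continuousOn hΦ hlam) (fun t ht => ?_) fun t ht => ?_
  all_goals rw [interior_Ici] at ht
  · exact (hu.hasDerivAt hΦ hlam ht).hasDerivWithinAt
  · exact sub_nonneg.2 (hu.comp_le hΦ hconv h0 hlam ht.le)

lemma exp_mul_eq_integral (hu : IsMassSolution Φ lam u) (hΦ : ContinuousOn Φ (Ici 0))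
    (hlam : 0 ≤ lam) (α : ℝ) {t : ℝ} (ht : 0 ≤ t) :
    Real.exp (α * t) * u t =
      ∫ s in (0:ℝ)..t, Real.exp (α * s) * (lam - Φ (u s) + α * u s) := by
  have hexp : Continuous fun s => Real.exp (α * s) := by fun_prop
  have hcont := hu.continuousOn hΦ hlam
  have hderiv : ∀ s ∈ Ioo 0 t, HasDerivAt (fun s => Real.exp (α * s) * u s)
      (Real.exp (α * s) * (lam - Φ (u s) + α * u s)) s := fun s hs =>
    (((hasDerivAt_id s).const_mul α).exp.mul (hu.hasDerivAt hΦ hlam hs.1)).congr_deriv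
      (by simp only [id, mul_one]; ring)
  have hintegrand : ContinuousOn (fun s => Real.exp (α * s) * (lam - Φ (u s) + α * u s)) (Icc 0 t) :=
    (hexp.continuousOn.mul ((continuousOn_const.sub (hu.continuousOn_comp hΦ hlam)).add
      (continuousOn_const.mul hcont))).mono Icc_subset_Ici_self
  rw [intervalIntegral.integral_eq_sub_of_hasDerivAt_of_le
    (f := fun s => Real.exp (α * s) * u s) ht
    (hexp.continuousOn.mul (hcont.mono Icc_subset_Ici_self)) hderiv
    (hintegrand.intervalIntegrable_of_Icc ht), hu.apply_zero, mul_zero, sub_zero]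

lemma sub_le_mul_exp (hu : IsMassSolution Φ lam u) (hΦ : ContinuousOn Φ (Ici 0))
    (hconv : ConvexOn ℝ (Ici 0) Φ) (h0 : Φ 0 = 0) {α : ℝ}
    (hmono : MonotoneOn (fun v => Φ v - α * v) (Ici 0)) (hlam : 0 ≤ lam) {t : ℝ} (ht : 0 ≤ t) :
    lam - Φ (u t) ≤ lam * Real.exp (-α * t) := by
  set G := fun s => lam - Φ (u s) + α * u s
  have hG : AntitoneOn G (Icc 0 t) := fun r hr s hs hrs => by
    have := hmono (hu.1 r hr.1) (hu.1 s hs.1) (hu.monotoneOn hΦ hconv h0 hlam hr.1 hs.1 hrs)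
    simp only [G]
    linarith
  have hGc : ContinuousOn G (Icc 0 t) :=
    ((continuousOn_const.sub (hu.continuousOn_comp hΦ hlam)).add
      (continuousOn_const.mul (hu.continuousOn hΦ hlam))).mono Icc_subset_Ici_self
  have hG0 : G 0 = lam := by simp [G, hu.apply_zero, h0]
  have key := exp_mul_sub_integral_le_of_antitoneOn (α := α) ht hG hGc
  rw [← hu.exp_mul_eq_integral hΦ hlam α ht, hG0] at key
  rw [neg_mul, Real.exp_neg, ← div_eq_mul_inv, le_div_iff₀ (Real.exp_pos _)]
  simp only [G] at key
  linarith

end IsMassSolution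

theorem first_jump_density_bound_general
    (α β : ℝ) (hβ : 0 ≤ β) (π : Measure ℝ)
    (hsupp : π (Set.Iic 0) = 0)
    (hint : Integrable (fun θ => min θ (θ ^ 2)) π)
    (lam : ℝ) (hlam : 0 ≤ lam)
    (u : ℝ → ℝ) (hu : IsMassSolution (Phi α β π) lam u) :
    (∀ t : ℝ, 0 ≤ t →
      0 ≤ lam - Phi α β π (u t) ∧
      lam - Phi α β π (u t) ≤ lam * Real.exp (-α * t)) ∧
    (∀ x : ℝ, 0 < x → ∀ t : ℝ, 0 ≤ t →
      x * (lam - Phi α β π (u t)) * Real.exp (-x * u t) ≤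
        x * lam * Real.exp (-α * t)) := by
  have hπ : ∀ᵐ θ ∂π, 0 ≤ θ :=
    ae_iff.2 <| measure_mono_null (fun θ (hθ : ¬0 ≤ θ) => (not_le.1 hθ).le) hsupp
  have hΦ := continuousOn_Phi (α := α) (β := β) hπ hint
  have hconv := convexOn_Phi (α := α) hβ hπ hint
  have hbound : ∀ t : ℝ, 0 ≤ t →
      0 ≤ lam - Phi α β π (u t) ∧ lam - Phi α β π (u t) ≤ lam * Real.exp (-α * t) :=
    fun t ht => ⟨sub_nonneg.2 (hu.comp_le hΦ hconv Phi_zero hlam ht),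
      hu.sub_le_mul_exp hΦ hconv Phi_zero (monotoneOn_Phi_sub_mul hβ hπ hint) hlam ht⟩
  refine ⟨hbound, fun x hx t ht => ?_⟩
  obtain ⟨hnonneg, hle⟩ := hbound t ht
  have hexp : Real.exp (-x * u t) ≤ 1 :=
    Real.exp_le_one_iff.2 (by nlinarith [hu.1 t ht])
  calc x * (lam - Phi α β π (u t)) * Real.exp (-x * u t)
      ≤ x * (lam - Phi α β π (u t)) := mul_le_of_le_one_right (by positivity) hexp
    _ ≤ x * lam * Real.exp (-α * t) := by rw [mul_assoc]; gcongr

/-- Analytic bound underlying Corollary 3.13: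
`0 ≤ λ - Φ(u_t(λ)) ≤ λ e^{-αt}`, and hence the density
`g(t) = x (λ - Φ(u_t(λ))) e^{-x u_t(λ)}` satisfies `g(t) ≤ x λ e^{-αt}`. -/
theorem first_jump_density_bound
    (α β : ℝ) (hβ : 0 ≤ β) (π : Measure ℝ)
    (hsupp : π (Set.Iic 0) = 0) (hσ : SigmaFinite π)
    (hint : Integrable (fun θ => min θ (θ ^ 2)) π)
    (lam : ℝ) (hlam : 0 ≤ lam)
    (u : ℝ → ℝ) (hu : IsMassSolution (Phi α β π) lam u) :
    (∀ t : ℝ, 0 ≤ t →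
      0 ≤ lam - Phi α β π (u t) ∧
      lam - Phi α β π (u t) ≤ lam * Real.exp (-α * t)) ∧
    (∀ x : ℝ, 0 < x → ∀ t : ℝ, 0 ≤ t →
      x * (lam - Phi α β π (u t)) * Real.exp (-x * u t) ≤
        x * lam * Real.exp (-α * t)) :=
  first_jump_density_bound_general α β hβ π hsupp hint lam hlam u hu
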